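/- ℓ² is a flat ℓ^∞-module, but ℓ² is not a faithfully flat ℓ^∞-module. -/

import Mathlib

open Filter Topology
open scoped ENNReal

set_option synthInstance.maxHeartbeats 1000000
set_option maxHeartbeats 1000000

noncomputable section

/-- `ℓ^∞`: the Banach algebra of bounded complex sequences, realised as a subalgebra of the
algebra of all complex sequences, with pointwise (termwise) operations. -/
def linf : Subalgebra ℂ (ℕ → ℂ) where
  carrier := {f | Memℓp f ∞}
  mul_mem' {f g} hf hg := show Memℓp (f * g) ∞ from Memℓp.infty_mul hf hg
  one_mem' := show Memℓp (1 : ℕ → ℂ) ∞ from one_memℓp_infty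
  add_mem' {f g} hf hg := show Memℓp (f + g) ∞ from Memℓp.add hf hg
  zero_mem' := show Memℓp (0 : ℕ → ℂ) ∞ from zero_memℓp
  algebraMap_mem' c := show Memℓp (algebraMap ℂ (ℕ → ℂ) c) ∞ from algebraMap_memℓp_infty c

lemma memℓp_two_infty_mul {f g : ℕ → ℂ} (hf : Memℓp f ∞) (hg : Memℓp g 2) :
    Memℓp (f * g) 2 := by
  obtain ⟨C, hC⟩ := memℓp_infty_iff.1 hf
  have hC' : ∀ i, ‖f i‖ ≤ C := fun i => hC ⟨i, rfl⟩
  have hC0 : 0 ≤ C := (norm_nonneg (f 0)).trans (hC' 0)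
  apply memℓp_gen
  have hgs : Summable fun i => ‖g i‖ ^ (2 : ℝ≥0∞).toReal := hg.summable (by norm_num)
  refine (hgs.mul_left (C ^ (2 : ℝ≥0∞).toReal)).of_nonneg_of_le
      (fun i => Real.rpow_nonneg (norm_nonneg _) _) (fun i => ?_)
  calc ‖(f * g) i‖ ^ (2 : ℝ≥0∞).toReal
      ≤ (C * ‖g i‖) ^ (2 : ℝ≥0∞).toReal := by
        refine Real.rpow_le_rpow (norm_nonneg _) ?_ ENNReal.toReal_nonneg
        rw [Pi.mul_apply, norm_mul]
        exact mul_le_mul_of_nonneg_right (hC' i) (norm_nonneg _)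
    _ = C ^ (2 : ℝ≥0∞).toReal * ‖g i‖ ^ (2 : ℝ≥0∞).toReal :=
        Real.mul_rpow hC0 (norm_nonneg _)

/-- `ℓ²`: the Hilbert space of square-summable complex sequences, as a module over `ℓ^∞`,
the action being termwise multiplication. -/
def l2 : Submodule linf (ℕ → ℂ) where
  carrier := {f | Memℓp f 2}
  add_mem' {f g} hf hg := show Memℓp (f + g) 2 from Memℓp.add hf hg
  zero_mem' := show Memℓp (0 : ℕ → ℂ) 2 from zero_memℓp
  smul_mem' c f hf := by
    have hsmul : c • f = (c : ℕ → ℂ) * f := Algebra.smul_def c f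
    rw [Set.mem_setOf_eq, hsmul]
    exact memℓp_two_infty_mul c.2 hf

instance : CommRing linf := inferInstance
instance : Module linf (ℕ → ℂ) := inferInstance
instance : AddCommGroup l2 := inferInstance
instance : Module linf l2 := inferInstance

lemma single_mem_l2 (n : ℕ) : Pi.single n (1 : ℂ) ∈ l2 := by
  refine (memℓp_zero ?_).of_exponent_ge (by norm_num)
  refine (Set.finite_singleton n).subset ?_
  intro j hj
  simp only [Set.mem_setOf_eq] at hj
  simp only [Set.mem_singleton_iff]
  by_contra h
  exact hj (Pi.single_eq_of_ne h 1)

/-!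
Flatness follows from the equational criterion: a relation `∑ fᵢ xᵢ = 0` in `ℓ²` is
trivialised, coordinate by coordinate, by the orthogonal projection `1 - f* f / |f|²` onto the
kernel of `x ↦ ∑ fᵢ xᵢ`; its entries are bounded by `2`, so it is a matrix over `ℓ^∞`.

Faithful flatness fails because the proper ideal `c₀` of null sequences satisfies `c₀ ℓ² = ℓ²`.
Indeed, with the tails `sₙ = ∑_{k ≥ n} |xₖ|²` of `x ∈ ℓ²`, we have `x = s^{1/4} · (x / s^{1/4})`,
where `s^{1/4} → 0` and the second factor is square summable because
`|xₙ|² / √sₙ = (sₙ - sₙ₊₁) / √sₙ ≤ 2 (√sₙ - √sₙ₊₁)` telescopes.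
-/

namespace Matrix

open scoped ComplexOrder

variable {𝕜 ι : Type*} [RCLike 𝕜] [Fintype ι]

theorem dotProduct_star_self_eq_sum_norm_sq (v : ι → 𝕜) :
    v ⬝ᵥ star v = ((∑ i, ‖v i‖ ^ 2 : ℝ) : 𝕜) := by
  simp [dotProduct, RCLike.star_def, RCLike.mul_conj]

variable [DecidableEq ι]

/-- The orthogonal projection onto the kernel of `x ↦ v ⬝ᵥ x`; for `v = 0` the convention
`0⁻¹ = 0` makes it the identity. -/
def kerProj (v : ι → 𝕜) : Matrix ι ι 𝕜 :=
  1 - (v ⬝ᵥ star v)⁻¹ • vecMulVec (star v) v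

theorem vecMul_kerProj (v : ι → 𝕜) : v ᵥ* kerProj v = 0 := by
  rcases eq_or_ne v 0 with rfl | hv
  · simp
  · rw [kerProj, vecMul_sub, vecMul_one, vecMul_smul, vecMul_vecMulVec, smul_smul,
      inv_mul_cancel₀ (dotProduct_self_star_eq_zero.not.mpr hv), one_smul, sub_self]

theorem kerProj_mulVec_of_dotProduct_eq_zero {v x : ι → 𝕜} (h : v ⬝ᵥ x = 0) :
    kerProj v *ᵥ x = x := by
  rw [kerProj, sub_mulVec, one_mulVec, smul_mulVec, vecMulVec_mulVec, h]
  simp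

theorem norm_kerProj_apply_le (v : ι → 𝕜) (i j : ι) : ‖kerProj v i j‖ ≤ 2 := by
  set S := ∑ l, ‖v l‖ ^ 2
  have hS : ∀ l, ‖v l‖ ^ 2 ≤ S := fun l =>
    Finset.single_le_sum (f := fun l => ‖v l‖ ^ 2) (fun _ _ => by positivity) (Finset.mem_univ l)
  have hij : ‖v i‖ * ‖v j‖ ≤ S := by nlinarith [hS i, hS j, norm_nonneg (v i), norm_nonneg (v j)]
  have h1 : ‖(1 : Matrix ι ι 𝕜) i j‖ ≤ 1 := by
    rw [one_apply]; split_ifs <;> simp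
  have h2 : ‖(v ⬝ᵥ star v)⁻¹ * (star (v i) * v j)‖ ≤ 1 := by
    rw [dotProduct_star_self_eq_sum_norm_sq, norm_mul, norm_inv, norm_mul, norm_star,
      RCLike.norm_ofReal, abs_of_nonneg (by positivity), inv_mul_eq_div]
    exact div_le_one_of_le₀ hij (by positivity)
  calc ‖kerProj v i j‖ ≤ ‖(1 : Matrix ι ι 𝕜) i j‖ + ‖(v ⬝ᵥ star v)⁻¹ * (star (v i) * v j)‖ :=
        norm_sub_le _ _
    _ ≤ 2 := by linarith

end Matrix

section

variable {ι : Type*} [Fintype ι]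

theorem l2_coe_sum_smul_apply (a : ι → linf) (y : ι → l2) (k : ℕ) :
    (↑(∑ i, a i • y i) : ℕ → ℂ) k = ∑ i, (a i : ℕ → ℂ) k * (y i : ℕ → ℂ) k := by
  rw [Submodule.coe_sum, Finset.sum_apply]
  rfl

theorem linf_coe_sum_mul_apply (a b : ι → linf) (k : ℕ) :
    (↑(∑ i, a i * b i) : ℕ → ℂ) k = ∑ i, (a i : ℕ → ℂ) k * (b i : ℕ → ℂ) k := by
  rw [AddSubmonoidClass.coe_finsetSum, Finset.sum_apply]
  rfl

variable [DecidableEq ι]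

def pointwiseKerProj (f : ι → linf) : Matrix ι ι linf := fun i j =>
  ⟨fun k => Matrix.kerProj (fun l => (f l : ℕ → ℂ) k) i j,
    memℓp_infty ⟨2, by rintro _ ⟨k, rfl⟩; exact Matrix.norm_kerProj_apply_le _ i j⟩⟩

end

theorem l2_isTrivialRelation {l : ℕ} {f : Fin l → linf} {x : Fin l → l2}
    (h : ∑ i, f i • x i = 0) : Module.IsTrivialRelation f x := by
  refine ⟨l, pointwiseKerProj f, x, fun i => ?_, fun j => ?_⟩
  · ext k
    have hk : (fun l => (f l : ℕ → ℂ) k) ⬝ᵥ (fun l => (x l : ℕ → ℂ) k) = 0 := by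
      rw [dotProduct, ← l2_coe_sum_smul_apply, h]
      rfl
    rw [l2_coe_sum_smul_apply]
    exact (congrFun (Matrix.kerProj_mulVec_of_dotProduct_eq_zero hk) i).symm
  · ext k
    rw [linf_coe_sum_mul_apply]
    exact congrFun (Matrix.vecMul_kerProj _) j

theorem summable_sub_succ_of_antitone {u : ℕ → ℝ} (hu : Antitone u) (hu0 : ∀ n, 0 ≤ u n) :
    Summable fun n => u n - u (n + 1) :=
  summable_of_sum_range_le (fun n => sub_nonneg.2 (hu n.le_succ)) fun n => by
    rw [Finset.sum_range_sub']
    linarith [hu0 n]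

theorem sq_sub_sq_div_le {a b : ℝ} (hb : 0 ≤ b) (hba : b ≤ a) :
    (a ^ 2 - b ^ 2) / a ≤ 2 * (a - b) := by
  rcases (hb.trans hba).eq_or_lt with rfl | ha
  · simp [le_antisymm hba hb]
  rw [div_le_iff₀ ha]
  nlinarith

theorem summable_sub_div_sqrt_of_antitone {s : ℕ → ℝ} (hs : Antitone s) (hs0 : ∀ n, 0 ≤ s n) :
    Summable fun n => (s n - s (n + 1)) / √(s n) := by
  have hsqrt : Antitone fun n => √(s n) := fun _ _ h => Real.sqrt_le_sqrt (hs h)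
  have htel := (summable_sub_succ_of_antitone hsqrt fun n => Real.sqrt_nonneg _).mul_left 2
  refine htel.of_nonneg_of_le
    (fun n => div_nonneg (sub_nonneg.2 (hs n.le_succ)) (Real.sqrt_nonneg _)) fun n => ?_
  calc (s n - s (n + 1)) / √(s n) = (√(s n) ^ 2 - √(s (n + 1)) ^ 2) / √(s n) := by
        rw [Real.sq_sqrt (hs0 n), Real.sq_sqrt (hs0 _)]
    _ ≤ 2 * (√(s n) - √(s (n + 1))) := sq_sub_sq_div_le (Real.sqrt_nonneg _) (hsqrt n.le_succ)

theorem memℓp_two_iff_summable_sq {E : Type*} [NormedAddCommGroup E] {x : ℕ → E} :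
    Memℓp x 2 ↔ Summable fun n => ‖x n‖ ^ 2 := by
  rw [memℓp_gen_iff (by norm_num)]
  norm_num

theorem memℓp_infty_of_tendsto {E : Type*} [NormedAddCommGroup E] {a : ℕ → E} {c : E}
    (h : Tendsto a atTop (𝓝 c)) : Memℓp a ∞ := by
  obtain ⟨C, hC⟩ := isBounded_iff_forall_norm_le.1 (Metric.isBounded_range_of_tendsto a h)
  exact memℓp_infty ⟨C, by rintro _ ⟨n, rfl⟩; exact hC _ ⟨n, rfl⟩⟩

theorem exists_tendsto_zero_mul_eq_of_memℓp_two {x : ℕ → ℂ} (hx : Memℓp x 2) :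
    ∃ a g : ℕ → ℂ, Tendsto a atTop (𝓝 0) ∧ Memℓp g 2 ∧ x = a * g := by
  set s : ℕ → ℝ := fun n => ∑' k, ‖x (k + n)‖ ^ 2
  have hsum := memℓp_two_iff_summable_sq.1 hx
  have hs0 : ∀ n, 0 ≤ s n := fun n => tsum_nonneg fun _ => by positivity
  have hdiff : ∀ n, s n - s (n + 1) = ‖x n‖ ^ 2 := fun n => by
    simp only [s, ((summable_nat_add_iff n).2 hsum).tsum_eq_zero_add, zero_add, add_assoc,
      add_comm 1 n]
    ring
  have hs : Antitone s := antitone_nat_of_succ_le fun n => by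
    linarith [hdiff n, sq_nonneg ‖x n‖]
  have hs_lim : Tendsto s atTop (𝓝 0) := tendsto_sum_nat_add fun n => ‖x n‖ ^ 2
  refine ⟨fun n => (√√(s n) : ℂ), fun n => x n / √√(s n), ?_, ?_, funext fun n => ?_⟩
  · have hcont : Continuous fun t : ℝ => (√√t : ℂ) := by fun_prop
    simpa [Function.comp_def] using (hcont.tendsto 0).comp hs_lim
  · refine memℓp_two_iff_summable_sq.2 ((summable_sub_div_sqrt_of_antitone hs hs0).congr
      fun n => ?_)
    rw [hdiff, norm_div, Complex.norm_real, Real.norm_of_nonneg (Real.sqrt_nonneg _), div_pow,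
      Real.sq_sqrt (Real.sqrt_nonneg _)]
  · rcases eq_or_ne (√√(s n)) 0 with h | h
    · have hsn : s n = 0 := le_antisymm (by simpa [Real.sqrt_eq_zero'] using h) (hs0 n)
      have hxn : ‖x n‖ ^ 2 = 0 :=
        le_antisymm (by linarith [hdiff n, hs0 (n + 1)]) (sq_nonneg _)
      simp_all
    · exact (mul_div_cancel₀ _ (Complex.ofReal_ne_zero.2 h)).symm

def c0 : Ideal linf where
  carrier := {a | Tendsto (a : ℕ → ℂ) atTop (𝓝 0)}
  add_mem' {a b} ha hb := show Tendsto (fun n => (a : ℕ → ℂ) n + (b : ℕ → ℂ) n) atTop (𝓝 0) by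
    simpa only [add_zero] using ha.add hb
  zero_mem' := tendsto_const_nhds
  smul_mem' c a ha := by
    obtain ⟨C, hC⟩ := memℓp_infty_iff.1 c.2
    have hc : IsBoundedUnder (· ≤ ·) atTop fun n => ‖(c : ℕ → ℂ) n‖ :=
      isBoundedUnder_of ⟨C, fun n => hC ⟨n, rfl⟩⟩
    simpa [mul_comm] using NormedField.tendsto_zero_smul_of_tendsto_zero_of_bounded ha hc

theorem c0_ne_top : c0 ≠ ⊤ := fun h =>
  one_ne_zero (tendsto_nhds_unique tendsto_const_nhds (h ▸ Submodule.mem_top : (1 : linf) ∈ c0))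

theorem c0_smul_top_l2 : c0 • (⊤ : Submodule linf l2) = ⊤ := by
  refine eq_top_iff.2 fun x _ => ?_
  obtain ⟨a, g, ha, hg, hx⟩ := exists_tendsto_zero_mul_eq_of_memℓp_two x.2
  have : x = (⟨a, memℓp_infty_of_tendsto ha⟩ : linf) • (⟨g, hg⟩ : l2) := Subtype.ext hx
  exact this ▸ Submodule.smul_mem_smul ha Submodule.mem_top

/-- `ℓ²` is a flat `ℓ^∞`-module, but `ℓ²` is not a faithfully flat
`ℓ^∞`-module. -/
theorem l2_flat_not_faithfully_flat :
    Module.Flat linf l2 ∧ ¬ Module.FaithfullyFlat linf l2 :=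
  ⟨.of_forall_isTrivialRelation l2_isTrivialRelation, fun h =>
    ((Module.FaithfullyFlat.iff_flat_and_proper_ideal _ _).1 h).2 c0 c0_ne_top c0_smul_top_l2⟩
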